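/- arXiv:1906.06373 — 3 statements merged into one kernel-verified Lean document; each statement's English description precedes it below -/
import Mathlib

section
/- Let φ(x) be the compositional inverse of x(1-x)/(1+x) as a formal power series over ℚ. Then φ(x) = (1 - x - √(1-6x+x²))/2, i.e., φ satisfies (2φ - 1 + x)² = 1 - 6x + x² and φ(0) = 0. -/
open PowerSeries

/-- Composition `f ∘ a` of formal power series (intended for `a` with zero constant term). -/
noncomputable def psComp {R : Type*} [CommRing R] (f a : R⟦X⟧) : R⟦X⟧ :=
  PowerSeries.mk fun n => ∑ i ∈ Finset.range (n + 1), PowerSeries.coeff i f * PowerSeries.coeff n (a ^ i)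

/- Composition with a series `a` without constant term is substitution `f ↦ f.subst a`, a ring
homomorphism. Applying it to `(x(1-x)/(1+x)) * (1+x) = x(1-x)` turns `u(φ) = x` into
`x(1+φ) = φ(1-φ)`, and completing the square gives `(2φ - 1 + x)² = 1 - 6x + x²`. -/

theorem coeff_pow_eq_zero_of_lt {R : Type*} [CommRing R] {a : R⟦X⟧} (ha : constantCoeff a = 0)
    {n i : ℕ} (h : n < i) : coeff n (a ^ i) = 0 :=
  X_pow_dvd_iff.mp (pow_dvd_pow_of_dvd (X_dvd_iff.mpr ha) i) n h

theorem psComp_eq_subst {R : Type*} [CommRing R] (f : R⟦X⟧) {a : R⟦X⟧}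
    (ha : constantCoeff a = 0) : psComp f a = f.subst a := by
  ext n
  rw [coeff_subst' (HasSubst.of_constantCoeff_zero' ha), psComp, coeff_mk]
  refine (finsum_eq_sum_of_support_subset _ fun i hi => ?_).symm
  by_contra hn
  exact hi (by dsimp only; rw [coeff_pow_eq_zero_of_lt ha (by simpa using hn), mul_zero])

theorem stmt3 (φ : ℚ⟦X⟧)
    (hφ0 : PowerSeries.constantCoeff φ = 0)
    (hrev : psComp (X * (1 - X) * (1 + X : ℚ⟦X⟧)⁻¹) φ = X) :
    (2 * φ - 1 + X) ^ 2 = 1 - 6 * X + X ^ 2 ∧ PowerSeries.constantCoeff φ = 0 := by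
  refine ⟨?_, hφ0⟩
  have hcancel : (X * (1 - X) * (1 + X : ℚ⟦X⟧)⁻¹) * (1 + X) = X * (1 - X) := by
    rw [mul_assoc, PowerSeries.inv_mul_cancel _ (by simp), mul_one]
  have hφ := HasSubst.of_constantCoeff_zero' hφ0
  rw [psComp_eq_subst _ hφ0, ← coe_substAlgHom hφ] at hrev
  have hquad := congrArg (substAlgHom hφ) hcancel
  simp only [map_mul, hrev, map_add, map_sub, map_one, substAlgHom_X] at hquad
  linear_combination (4 : ℚ⟦X⟧) * hquad
end

section
/- Let f be a formal power series over ℚ with f(0)=0, f'(0)=1, and let φ = Rev(x²/f(x)). Let u(x) = xφ'(x)/φ(x) and ψ(x) = x²/f(x). Then the Riordan product (xφ'(x)/φ(x), φ(x)) · (2 - xf'(x)/f(x), x²/f(x)) equals the identity (1, x); that is, u(x)·((2 - xf'/f) ∘ φ)(x) = 1 and ψ(φ(x)) = x. -/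
open PowerSeries

section Aux

variable (a : ℚ⟦X⟧)

private lemma coeff_derivativeFun' (f : ℚ⟦X⟧) (n : ℕ) :
    coeff n (derivativeFun f) = coeff (n + 1) f * (n + 1) :=
  coeff_derivative f n

private lemma derivativeFun_C' (r : ℚ) : derivativeFun (C r : ℚ⟦X⟧) = 0 :=
  derivative_C

private lemma pow_coeff_zero (ha : constantCoeff a = 0) {i n : ℕ} (h : n < i) :
    coeff n (a ^ i) = 0 := by
  have hd : (X : ℚ⟦X⟧) ^ i ∣ a ^ i :=
    pow_dvd_pow_of_dvd (PowerSeries.X_dvd_iff.mpr ha) i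
  exact (PowerSeries.X_pow_dvd_iff.mp hd) n h

private noncomputable def ev (P : Polynomial ℚ) : ℚ⟦X⟧ := Polynomial.eval₂ (C (R := ℚ)) a P

private lemma coeff_ev (ha : constantCoeff a = 0) (P : Polynomial ℚ) (n : ℕ) :
    coeff n (ev a P) = ∑ i ∈ Finset.range (n + 1), P.coeff i * coeff n (a ^ i) := by
  have hdeg : P.natDegree < max (n + 1) (P.natDegree + 1) :=
    lt_of_lt_of_le (Nat.lt_succ_self _) (le_max_right _ _)
  rw [ev, Polynomial.eval₂_eq_sum_range' (C (R := ℚ)) hdeg a, map_sum]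
  simp only [coeff_C_mul]
  refine (Finset.sum_subset (Finset.range_subset_range.mpr (le_max_left _ _)) ?_).symm
  intro i _ hi
  rw [Finset.mem_range, not_lt] at hi
  rw [pow_coeff_zero a ha (lt_of_lt_of_le (Nat.lt_succ_self n) hi), mul_zero]

private lemma coeff_psComp (ha : constantCoeff a = 0) (f : ℚ⟦X⟧) {n m : ℕ} (h : n < m) :
    coeff n (psComp f a) = coeff n (ev a (PowerSeries.trunc m f)) := by
  rw [psComp, coeff_mk, coeff_ev a ha]
  refine Finset.sum_congr rfl fun i hi => ?_
  rw [Finset.mem_range, Nat.lt_succ_iff] at hi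
  rw [PowerSeries.coeff_trunc, if_pos (lt_of_le_of_lt hi h)]

private lemma ev_congr (ha : constantCoeff a = 0) {P Q : Polynomial ℚ} {n : ℕ}
    (h : ∀ i ≤ n, P.coeff i = Q.coeff i) : coeff n (ev a P) = coeff n (ev a Q) := by
  rw [coeff_ev a ha, coeff_ev a ha]
  refine Finset.sum_congr rfl fun i hi => ?_
  rw [Finset.mem_range, Nat.lt_succ_iff] at hi
  rw [h i hi]

private lemma ev_mul (P Q : Polynomial ℚ) : ev a (P * Q) = ev a P * ev a Q :=
  Polynomial.eval₂_mul _ _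

private lemma psComp_mul (ha : constantCoeff a = 0) (f g : ℚ⟦X⟧) :
    psComp (f * g) a = psComp f a * psComp g a := by
  ext n
  rw [coeff_psComp a ha (f * g) (Nat.lt_succ_self n), PowerSeries.coeff_mul]
  have : ∀ p ∈ Finset.HasAntidiagonal.antidiagonal n,
      coeff p.1 (psComp f a) * coeff p.2 (psComp g a)
      = coeff p.1 (ev a (trunc (n+1) f)) * coeff p.2 (ev a (trunc (n+1) g)) := by
    intro p hp
    rw [Finset.HasAntidiagonal.mem_antidiagonal] at hp
    rw [coeff_psComp a ha f (show p.1 < n + 1 by omega),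
      coeff_psComp a ha g (show p.2 < n + 1 by omega)]
  rw [Finset.sum_congr rfl this, ← PowerSeries.coeff_mul, ← ev_mul]
  refine ev_congr a ha fun i hi => ?_
  rw [PowerSeries.coeff_trunc, if_pos (by omega), PowerSeries.coeff_mul, Polynomial.coeff_mul]
  refine Finset.sum_congr rfl fun p hp => ?_
  rw [Finset.HasAntidiagonal.mem_antidiagonal] at hp
  rw [PowerSeries.coeff_trunc, if_pos (by omega), PowerSeries.coeff_trunc, if_pos (by omega)]

private lemma psComp_sub (f g : ℚ⟦X⟧) : psComp (f - g) a = psComp f a - psComp g a := by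
  ext n
  rw [psComp, psComp, psComp, map_sub, coeff_mk, coeff_mk, coeff_mk, ← Finset.sum_sub_distrib]
  refine Finset.sum_congr rfl fun i _ => ?_
  rw [map_sub, sub_mul]

private lemma psComp_add (f g : ℚ⟦X⟧) : psComp (f + g) a = psComp f a + psComp g a := by
  ext n
  rw [psComp, psComp, psComp, map_add, coeff_mk, coeff_mk, coeff_mk, ← Finset.sum_add_distrib]
  refine Finset.sum_congr rfl fun i _ => ?_
  rw [map_add, add_mul]

private lemma psComp_C (c : ℚ) : psComp (C c) a = C c := by
  ext n
  rw [psComp, coeff_mk]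
  simp only [PowerSeries.coeff_C, ite_mul, zero_mul]
  rw [Finset.sum_ite_eq' (Finset.range (n+1)) 0 (fun i => c * coeff n (a ^ i))]
  simp [PowerSeries.coeff_one, PowerSeries.coeff_C]

private lemma psComp_two : psComp (2 : ℚ⟦X⟧) a = 2 := by
  have h2 : (2 : ℚ⟦X⟧) = C 2 := by rw [map_ofNat]
  rw [h2, psComp_C]

private lemma psComp_X (ha : constantCoeff a = 0) : psComp X a = a := by
  ext n
  rw [psComp, coeff_mk]
  rcases n with _ | n
  · simp [PowerSeries.coeff_X, ha]
  · rw [Finset.sum_eq_single 1]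
    · simp
    · intro i hi h1
      simp [PowerSeries.coeff_X, h1]
    · intro h
      exact absurd (Finset.mem_range.mpr (by omega)) h

private lemma derivativeFun_X : derivativeFun (X : ℚ⟦X⟧) = 1 := by
  ext n
  rw [coeff_derivativeFun', PowerSeries.coeff_X, PowerSeries.coeff_one]
  rcases n with _ | n <;> simp

private lemma derivativeFun_zero : derivativeFun (0 : ℚ⟦X⟧) = 0 := by
  ext n
  simp [coeff_derivativeFun']

private lemma derivativeFun_pow (b : ℚ⟦X⟧) (k : ℕ) :
    derivativeFun (b ^ k) = (k : ℚ⟦X⟧) * b ^ (k - 1) * derivativeFun b := by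
  have key : ∀ m : ℕ, derivativeFun (b ^ (m + 1)) = ((m : ℚ⟦X⟧) + 1) * b ^ m * derivativeFun b := by
    intro m
    induction m with
    | zero => simp
    | succ m ih =>
      rw [pow_succ, derivativeFun_mul, ih]
      simp only [smul_eq_mul]
      push_cast
      ring
  rcases k with _ | m
  · simp [derivativeFun_one]
  · rw [key m, Nat.add_sub_cancel, Nat.cast_succ]

private lemma ev_derivativeFun (P : Polynomial ℚ) :
    derivativeFun (ev a P) = ev a (Polynomial.derivative P) * derivativeFun a := by
  induction P using Polynomial.induction_on' with
  | add P Q hP hQ =>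
    simp only [ev, Polynomial.derivative_add, Polynomial.eval₂_add] at *
    rw [derivativeFun_add, hP, hQ]
    ring
  | monomial k c =>
    simp only [ev, Polynomial.derivative_monomial, Polynomial.eval₂_monomial]
    rw [derivativeFun_mul, derivativeFun_C', derivativeFun_pow]
    simp only [smul_eq_mul, map_mul, map_natCast, mul_zero]
    push_cast
    ring

private lemma psComp_deriv (ha : constantCoeff a = 0) (f : ℚ⟦X⟧) :
    derivativeFun (psComp f a) = psComp (derivativeFun f) a * derivativeFun a := by
  ext n
  rw [coeff_derivativeFun', coeff_psComp a ha f (show n + 1 < n + 2 by omega),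
    ← coeff_derivativeFun', ev_derivativeFun, PowerSeries.coeff_mul, PowerSeries.coeff_mul]
  refine Finset.sum_congr rfl fun p hp => ?_
  rw [Finset.HasAntidiagonal.mem_antidiagonal] at hp
  rw [coeff_psComp a ha _ (show p.1 < n + 2 by omega)]
  congr 1
  refine ev_congr a ha fun i hi => ?_
  rw [Polynomial.coeff_derivative, PowerSeries.coeff_trunc, if_pos (by omega),
    PowerSeries.coeff_trunc, if_pos (by omega), coeff_derivativeFun']

end Aux

theorem stmt8 (f q φ u w : ℚ⟦X⟧)
    (hf0 : PowerSeries.constantCoeff f = 0)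
    (hf1 : PowerSeries.coeff 1 f = 1)
    (hq : q * f = X ^ 2) (hq0 : PowerSeries.constantCoeff q = 0)
    (hφ0 : PowerSeries.constantCoeff φ = 0)
    (hφ : psComp q φ = X)
    (hu : u * φ = X * PowerSeries.derivativeFun φ)
    (hw : w * f = X * PowerSeries.derivativeFun f) :
    u * psComp (2 - w) φ = 1 ∧ psComp q φ = X := by
  refine ⟨?_, hφ⟩
  set F := psComp f φ with hF
  set F' := psComp (derivativeFun f) φ with hF'
  set W := psComp w φ with hW
  set Q' := psComp (derivativeFun q) φ with hQ'
  set Dφ := derivativeFun φ with hDφ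
  -- h1 : X * F = φ * φ
  have h1 : (X : ℚ⟦X⟧) * F = φ * φ := by
    have e : psComp (q * f) φ = psComp (X * X) φ := by rw [hq, sq]
    rw [psComp_mul φ hφ0, psComp_mul φ hφ0, hφ, psComp_X φ hφ0] at e
    exact e
  -- h2 : Q' * Dφ = 1
  have h2 : Q' * Dφ = 1 := by
    have e := congrArg derivativeFun hφ
    rw [psComp_deriv φ hφ0] at e
    rw [hQ', hDφ, e, derivativeFun_X]
  -- hd : f * Dq + q * Df = 2 * X
  have hd : f * derivativeFun q + q * derivativeFun f = 2 * X := by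
    have e := congrArg derivativeFun hq
    rw [derivativeFun_mul, derivativeFun_pow, derivativeFun_X] at e
    simp only [smul_eq_mul, pow_one, show 2 - 1 = 1 from rfl, mul_one] at e
    push_cast at e
    linear_combination e
  -- h3 : F * Q' + X * F' = 2 * φ
  have h3 : F * Q' + X * F' = 2 * φ := by
    have e : psComp (f * derivativeFun q + q * derivativeFun f) φ = psComp (2 * X) φ := by
      rw [hd]
    rw [psComp_add, psComp_mul φ hφ0, psComp_mul φ hφ0, psComp_mul φ hφ0, hφ,
      psComp_X φ hφ0, psComp_two] at e
    rw [← hF, ← hF', ← hQ'] at e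
    linear_combination e
  -- h4 : W * F = φ * F'
  have h4 : W * F = φ * F' := by
    have e : psComp (w * f) φ = psComp (X * derivativeFun f) φ := by rw [hw]
    rw [psComp_mul φ hφ0, psComp_mul φ hφ0, psComp_X φ hφ0] at e
    rw [hW, hF, hF']
    exact e
  -- nonvanishing
  have hφne : φ ≠ 0 := by
    intro h0
    have h2' : Q' * derivativeFun (0 : ℚ⟦X⟧) = 1 := by rw [← h0, ← hDφ]; exact h2
    rw [derivativeFun_zero, mul_zero] at h2'
    exact zero_ne_one h2'
  have hFne : F ≠ 0 := by
    intro h0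
    rw [h0, mul_zero] at h1
    exact hφne (by
      have := h1.symm
      exact (mul_self_eq_zero).mp this)
  have hne : φ * F ≠ 0 := mul_ne_zero hφne hFne
  -- final computation
  rw [psComp_sub, psComp_two, ← hW]
  refine mul_right_cancel₀ hne ?_
  have hu' : u * φ = X * Dφ := hu
  linear_combination ((2 - W) * F) * hu' + (-(X * Dφ)) * h4 + (-(φ * Dφ)) * h3
    + (φ * F) * h2 + (2 * Dφ) * h1
end

section
/- Let g, f be formal power series over a field of characteristic zero with g(0) ≠ 0, f(0)=0, f'(0)=1, let φ = Rev(x²/f), and let ψ be a power series with ψ(0)≠0. If φ(x)φ'(x)·g(φ(x))/f(φ(x)) = ψ(x), then g(x) = (f(x)/x)·φ̄'(x)·ψ(φ̄(x)), where φ̄ = Rev(φ). -/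
open PowerSeries

namespace PsCompAux

open Finset Polynomial

variable {K : Type*} [CommRing K]

lemma coeff_derivativeFun' (f : K⟦X⟧) (n : ℕ) :
    PowerSeries.coeff n (PowerSeries.derivativeFun f) = PowerSeries.coeff (n + 1) f * (n + 1) :=
  PowerSeries.coeff_derivative f n

lemma derivativeFun_coe' (f : K[X]) :
    PowerSeries.derivativeFun (f : K⟦X⟧) = Polynomial.derivative f :=
  PowerSeries.derivative_coe f

lemma derivativeFun_C' (r : K) : PowerSeries.derivativeFun (PowerSeries.C r) = 0 :=
  PowerSeries.derivative_C

lemma coeff_psComp (f a : K⟦X⟧) (n : ℕ) :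
    PowerSeries.coeff n (psComp f a) =
      ∑ i ∈ Finset.range (n + 1), PowerSeries.coeff i f * PowerSeries.coeff n (a ^ i) := by
  simp [psComp]

lemma coeff_pow_eq_zero {a : K⟦X⟧} (ha : constantCoeff a = 0) {n i : ℕ} (h : n < i) :
    PowerSeries.coeff n (a ^ i) = 0 := by
  have : (X : K⟦X⟧) ^ i ∣ a ^ i := pow_dvd_pow_of_dvd (PowerSeries.X_dvd_iff.mpr ha) i
  exact PowerSeries.X_pow_dvd_iff.mp this n h

lemma coeff_aeval {a : K⟦X⟧} (ha : constantCoeff a = 0) (P : K[X]) (n : ℕ) :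
    PowerSeries.coeff n (Polynomial.aeval a P) =
      ∑ i ∈ Finset.range (n + 1), P.coeff i * PowerSeries.coeff n (a ^ i) := by
  set M := max (n + 1) (P.natDegree + 1) with hM
  have hdeg : P.natDegree < M := lt_of_lt_of_le (Nat.lt_succ_self _) (le_max_right _ _)
  rw [Polynomial.aeval_eq_sum_range' hdeg, map_sum]
  rw [← Finset.sum_subset (Finset.range_subset_range.mpr (le_max_left (n+1) (P.natDegree+1)))]
  · apply Finset.sum_congr rfl
    intro i _
    rw [map_smul, smul_eq_mul]
  · intro i _ hi
    rw [Finset.mem_range, not_lt] at hi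
    rw [map_smul, smul_eq_mul, coeff_pow_eq_zero ha (Nat.lt_of_succ_le hi), mul_zero]


lemma coeff_psComp_congr {A B a : K⟦X⟧} {n : ℕ}
    (h : ∀ i ≤ n, PowerSeries.coeff i A = PowerSeries.coeff i B) :
    PowerSeries.coeff n (psComp A a) = PowerSeries.coeff n (psComp B a) := by
  rw [coeff_psComp, coeff_psComp]
  refine Finset.sum_congr rfl fun i hi => ?_
  rw [h i (Nat.lt_succ_iff.mp (Finset.mem_range.mp hi))]

lemma psComp_coe {a : K⟦X⟧} (ha : constantCoeff a = 0) (P : K[X]) :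
    psComp (↑P : K⟦X⟧) a = Polynomial.aeval a P := by
  ext n
  rw [coeff_psComp, coeff_aeval ha]
  refine Finset.sum_congr rfl fun i _ => ?_
  rw [Polynomial.coeff_coe]

lemma coeff_psComp_of_lt {a : K⟦X⟧} (ha : constantCoeff a = 0) (f : K⟦X⟧) {n N : ℕ}
    (h : n < N) :
    PowerSeries.coeff n (psComp f a) =
      PowerSeries.coeff n (Polynomial.aeval a (trunc N f)) := by
  rw [← psComp_coe ha]
  refine coeff_psComp_congr fun i hi => ?_
  rw [Polynomial.coeff_coe, coeff_trunc, if_pos (lt_of_le_of_lt hi h)]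

lemma psComp_add (A B a : K⟦X⟧) : psComp (A + B) a = psComp A a + psComp B a := by
  ext n
  rw [map_add, coeff_psComp, coeff_psComp, coeff_psComp, ← Finset.sum_add_distrib]
  refine Finset.sum_congr rfl fun i _ => ?_
  rw [map_add, add_mul]

lemma psComp_zero (a : K⟦X⟧) : psComp 0 a = 0 := by
  ext n; simp [coeff_psComp]

lemma psComp_mul {a : K⟦X⟧} (ha : constantCoeff a = 0) (A B : K⟦X⟧) :
    psComp (A * B) a = psComp A a * psComp B a := by
  ext n
  rw [PowerSeries.coeff_mul]
  have h1 : ∀ p ∈ Finset.HasAntidiagonal.antidiagonal n,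
      PowerSeries.coeff p.1 (psComp A a) * PowerSeries.coeff p.2 (psComp B a) =
      PowerSeries.coeff p.1 (Polynomial.aeval a (trunc (n+1) A)) *
        PowerSeries.coeff p.2 (Polynomial.aeval a (trunc (n+1) B)) := by
    intro p hp
    rw [Finset.HasAntidiagonal.mem_antidiagonal] at hp
    rw [coeff_psComp_of_lt ha A (Nat.lt_succ_of_le (hp ▸ Nat.le_add_right p.1 p.2)),
      coeff_psComp_of_lt ha B (Nat.lt_succ_of_le (hp ▸ Nat.le_add_left p.2 p.1))]
  rw [Finset.sum_congr rfl h1, ← PowerSeries.coeff_mul, ← map_mul,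
    coeff_psComp_of_lt ha (A * B) (Nat.lt_succ_self n), coeff_aeval ha, coeff_aeval ha]
  refine Finset.sum_congr rfl fun i hi => ?_
  have hin : i < n + 1 := Finset.mem_range.mp hi
  congr 1
  have := PowerSeries.trunc_trunc_mul_trunc (n := n+1) A B
  have h2 : Polynomial.coeff (trunc (n+1) ((trunc (n+1) A : K⟦X⟧) * (trunc (n+1) B : K⟦X⟧))) i
      = Polynomial.coeff (trunc (n+1) (A * B)) i := by rw [this]
  rw [coeff_trunc, if_pos hin, ← Polynomial.coeff_coe, Polynomial.coe_mul]
  have h3 := congrArg (fun p => Polynomial.coeff p i) this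
  rw [coeff_trunc, coeff_trunc, if_pos hin, if_pos hin] at h3
  exact h3.symm

lemma psComp_C {a : K⟦X⟧} (ha : constantCoeff a = 0) (c : K) :
    psComp (PowerSeries.C c) a = PowerSeries.C c := by
  rw [← Polynomial.coe_C, psComp_coe ha, Polynomial.aeval_C]
  rw [PowerSeries.algebraMap_apply]
  simp

lemma psComp_one {a : K⟦X⟧} (ha : constantCoeff a = 0) : psComp 1 a = 1 := by
  rw [← map_one (PowerSeries.C (R := K)), psComp_C ha, map_one]

lemma psComp_pow {a : K⟦X⟧} (ha : constantCoeff a = 0) (A : K⟦X⟧) (m : ℕ) :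
    psComp (A ^ m) a = psComp A a ^ m := by
  induction m with
  | zero => simpa using psComp_one ha
  | succ k ih => rw [pow_succ, psComp_mul ha, ih, pow_succ]

lemma psComp_X {a : K⟦X⟧} (ha : constantCoeff a = 0) : psComp X a = a := by
  ext n
  rw [coeff_psComp]
  rcases Nat.eq_zero_or_pos n with h | h
  · subst h
    simp [PowerSeries.coeff_zero_eq_constantCoeff, ha]
  · rw [Finset.sum_eq_single 1]
    · simp
    · intro i _ hi
      rw [PowerSeries.coeff_X i, if_neg hi, zero_mul]
    · intro h1
      exact absurd (Finset.mem_range.mpr (Nat.lt_succ_of_le h)) h1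

lemma psComp_X_right (A : K⟦X⟧) : psComp A X = A := by
  ext n
  rw [coeff_psComp]
  rw [Finset.sum_eq_single n]
  · rw [PowerSeries.coeff_X_pow, if_pos rfl, mul_one]
  · intro i _ hi
    rw [PowerSeries.coeff_X_pow, if_neg (fun h => hi h.symm), mul_zero]
  · intro h; exact absurd (Finset.mem_range.mpr (Nat.lt_succ_self n)) h

lemma constantCoeff_psComp (A a : K⟦X⟧) :
    constantCoeff (psComp A a) = constantCoeff A := by
  rw [← PowerSeries.coeff_zero_eq_constantCoeff_apply, coeff_psComp]
  simp

lemma psComp_aeval {b c : K⟦X⟧} (hb : constantCoeff b = 0) (hc : constantCoeff c = 0)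
    (P : K[X]) :
    psComp (Polynomial.aeval b P) c = Polynomial.aeval (psComp b c) P := by
  induction P using Polynomial.induction_on' with
  | add p q hp hq => rw [map_add, psComp_add, hp, hq, map_add]
  | monomial m k =>
      rw [Polynomial.aeval_monomial, Polynomial.aeval_monomial, psComp_mul hc,
        psComp_pow hc, PowerSeries.algebraMap_apply, psComp_C hc]

lemma psComp_assoc {b c : K⟦X⟧} (A : K⟦X⟧) (hb : constantCoeff b = 0)
    (hc : constantCoeff c = 0) :
    psComp (psComp A b) c = psComp A (psComp b c) := by
  ext n
  set P : K[X] := trunc (n + 1) A with hP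
  have hcoeA : ∀ i ≤ n, PowerSeries.coeff i A = PowerSeries.coeff i (↑P : K⟦X⟧) := by
    intro i hi
    rw [Polynomial.coeff_coe, hP, coeff_trunc, if_pos (Nat.lt_succ_of_le hi)]
  have h1 : PowerSeries.coeff n (psComp (psComp A b) c)
      = PowerSeries.coeff n (psComp (psComp (↑P : K⟦X⟧) b) c) := by
    refine coeff_psComp_congr fun i hi => ?_
    exact coeff_psComp_congr fun j hj => hcoeA j (le_trans hj hi)
  rw [h1, psComp_coe hb, psComp_aeval hb hc, ← psComp_coe (by rw [constantCoeff_psComp, hb]) P]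
  exact (coeff_psComp_congr fun i hi => (hcoeA i hi).symm)

lemma derivativeFun_pow (a : K⟦X⟧) (m : ℕ) :
    PowerSeries.derivativeFun (a ^ (m + 1)) =
      ((m : K⟦X⟧) + 1) * a ^ m * PowerSeries.derivativeFun a := by
  induction m with
  | zero => simp
  | succ k ih =>
      rw [pow_succ, PowerSeries.derivativeFun_mul, ih]
      push_cast
      ring_nf

lemma derivativeFun_aeval {a : K⟦X⟧} (ha : constantCoeff a = 0) (P : K[X]) :
    PowerSeries.derivativeFun (Polynomial.aeval a P) =
      Polynomial.aeval a (Polynomial.derivative P) * PowerSeries.derivativeFun a := by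
  induction P using Polynomial.induction_on' with
  | add p q hp hq =>
      rw [map_add, PowerSeries.derivativeFun_add, hp, hq, map_add, map_add, add_mul]
  | monomial m k =>
      rw [Polynomial.aeval_monomial, PowerSeries.algebraMap_apply, Algebra.algebraMap_self,
        RingHom.id_apply]
      cases m with
      | zero =>
          simp [PowerSeries.derivativeFun_mul, PsCompAux.derivativeFun_C',
            PowerSeries.derivativeFun_one]
      | succ m =>
          rw [PowerSeries.derivativeFun_mul, PsCompAux.derivativeFun_C',
            Polynomial.derivative_monomial, Polynomial.aeval_monomial,
            PowerSeries.algebraMap_apply, Algebra.algebraMap_self, RingHom.id_apply,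
            derivativeFun_pow, Nat.add_sub_cancel]
          push_cast
          rw [smul_zero, add_zero, smul_eq_mul, map_mul, map_add, map_one, map_natCast]
          ring

lemma derivativeFun_psComp {a : K⟦X⟧} (ha : constantCoeff a = 0) (A : K⟦X⟧) :
    PowerSeries.derivativeFun (psComp A a) =
      psComp (PowerSeries.derivativeFun A) a * PowerSeries.derivativeFun a := by
  ext n
  set P : K[X] := trunc (n + 2) A with hP
  have hcoeA : ∀ i ≤ n + 1, PowerSeries.coeff i A = PowerSeries.coeff i (↑P : K⟦X⟧) := by
    intro i hi
    rw [Polynomial.coeff_coe, hP, coeff_trunc, if_pos (Nat.lt_succ_of_le hi)]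
  have hderiv : ∀ i ≤ n, PowerSeries.coeff i (PowerSeries.derivativeFun A)
      = PowerSeries.coeff i (PowerSeries.derivativeFun (↑P : K⟦X⟧)) := by
    intro i hi
    rw [PsCompAux.coeff_derivativeFun', PsCompAux.coeff_derivativeFun',
      hcoeA (i + 1) (Nat.succ_le_succ hi)]
  have hL : PowerSeries.coeff n (PowerSeries.derivativeFun (psComp A a))
      = PowerSeries.coeff n (PowerSeries.derivativeFun (psComp (↑P : K⟦X⟧) a)) := by
    rw [PsCompAux.coeff_derivativeFun', PsCompAux.coeff_derivativeFun']
    rw [coeff_psComp_congr (fun i hi => hcoeA i hi)]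
  have hR : PowerSeries.coeff n (psComp (PowerSeries.derivativeFun A) a *
        PowerSeries.derivativeFun a)
      = PowerSeries.coeff n (psComp (PowerSeries.derivativeFun (↑P : K⟦X⟧)) a *
        PowerSeries.derivativeFun a) := by
    rw [PowerSeries.coeff_mul, PowerSeries.coeff_mul]
    refine Finset.sum_congr rfl fun p hp => ?_
    rw [Finset.HasAntidiagonal.mem_antidiagonal] at hp
    congr 1
    exact coeff_psComp_congr fun j hj =>
      hderiv j (le_trans hj (hp ▸ Nat.le_add_right p.1 p.2))
  rw [hL, hR, psComp_coe ha, derivativeFun_aeval ha, PsCompAux.derivativeFun_coe',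
    psComp_coe ha]

end PsCompAux

theorem stmt19 {K : Type*} [Field K] [CharZero K] (g f q φ φb ψ : K⟦X⟧)
    (hg0 : PowerSeries.constantCoeff g ≠ 0)
    (hf0 : PowerSeries.constantCoeff f = 0)
    (hf1 : PowerSeries.coeff 1 f = 1)
    (hq : q * f = X ^ 2) (hq0 : PowerSeries.constantCoeff q = 0)
    (hφ0 : PowerSeries.constantCoeff φ = 0)
    (hφ : psComp q φ = X)
    (hφb0 : PowerSeries.constantCoeff φb = 0)
    (hφb1 : psComp φ φb = X) (hφb2 : psComp φb φ = X)
    (hψ0 : PowerSeries.constantCoeff ψ ≠ 0)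
    (heq : φ * PowerSeries.derivativeFun φ * psComp g φ = ψ * psComp f φ) :
    g * X = f * PowerSeries.derivativeFun φb * psComp ψ φb := by
  have hXne : (X : K⟦X⟧) ≠ 0 := X_ne_zero
  have hφne : φ ≠ 0 := by
    intro h
    rw [h, PsCompAux.psComp_zero] at hφb1
    exact hXne hφb1.symm
  have hB : X * psComp f φ = φ * φ := by
    have h := congrArg (fun u => psComp u φ) hq
    rw [PsCompAux.psComp_mul hφ0, hφ, pow_two, PsCompAux.psComp_mul hφ0,
      PsCompAux.psComp_X hφ0] at h
    exact h
  have hD : X * PowerSeries.derivativeFun φ * psComp g φ = ψ * φ := by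
    apply mul_left_cancel₀ hφne
    calc φ * (X * PowerSeries.derivativeFun φ * psComp g φ)
        = X * (φ * PowerSeries.derivativeFun φ * psComp g φ) := by ring
      _ = X * (ψ * psComp f φ) := by rw [heq]
      _ = ψ * (X * psComp f φ) := by ring
      _ = ψ * (φ * φ) := by rw [hB]
      _ = φ * (ψ * φ) := by ring
  have hE : φb * psComp (PowerSeries.derivativeFun φ) φb * g = psComp ψ φb * X := by
    have h := congrArg (fun u => psComp u φb) hD
    rw [PsCompAux.psComp_mul hφb0, PsCompAux.psComp_mul hφb0, PsCompAux.psComp_X hφb0,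
      PsCompAux.psComp_assoc g hφ0 hφb0, hφb1, PsCompAux.psComp_X_right,
      PsCompAux.psComp_mul hφb0, hφb1] at h
    exact h
  have hC : φb * f = X * X := by
    have h := congrArg (fun u => psComp u φb) hB
    rw [PsCompAux.psComp_mul hφb0, PsCompAux.psComp_X hφb0,
      PsCompAux.psComp_assoc f hφ0 hφb0, hφb1, PsCompAux.psComp_X_right,
      PsCompAux.psComp_mul hφb0, hφb1] at h
    exact h
  have hX1 : PowerSeries.derivativeFun (X : K⟦X⟧) = 1 := by
    ext n
    rw [PsCompAux.coeff_derivativeFun']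
    rcases Nat.eq_zero_or_pos n with h | h
    · subst h; simp
    · rw [PowerSeries.coeff_X, if_neg (by omega), PowerSeries.coeff_one, if_neg (by omega),
        zero_mul]
  have hF : psComp (PowerSeries.derivativeFun φ) φb * PowerSeries.derivativeFun φb = 1 := by
    have h := PsCompAux.derivativeFun_psComp hφb0 φ
    rw [hφb1, hX1] at h
    exact h.symm
  apply mul_left_cancel₀ hXne
  calc X * (g * X) = (X * X) * g * 1 := by ring
    _ = (φb * f) * g *
        (psComp (PowerSeries.derivativeFun φ) φb * PowerSeries.derivativeFun φb) := by
        rw [hC, hF]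
    _ = f * PowerSeries.derivativeFun φb *
        (φb * psComp (PowerSeries.derivativeFun φ) φb * g) := by ring
    _ = f * PowerSeries.derivativeFun φb * (psComp ψ φb * X) := by rw [hE]
    _ = X * (f * PowerSeries.derivativeFun φb * psComp ψ φb) := by ring
end
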